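/- For any n ≥ 2 and any degrees d₁,…,dₙ ≥ 2, the composition map Φ : Poly^{mc}_{d₁} × ⋯ × Poly^{mc}_{dₙ} → Poly^{mc}_{d₁⋯dₙ}, (f₁,…,fₙ) ↦ f₁∘⋯∘fₙ, between spaces of monic centered complex polynomials, is well-defined (the composition of monic centered polynomials is monic centered) and is a proper map over ℂ (preimages of compact sets are compact). -/

import Mathlib

/-!
If `f ∘ g` has bounded coefficients, its roots are bounded (Cauchy bound). For every root `β` of
`f`, `g - β` divides `f ∘ g`, so `g - β` has bounded roots and hence (Vieta) bounded coefficients: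
this bounds every coefficient of `g` but the constant one, and bounds `g(0) - β`. As `f` is
centered, its roots average to `0`, which bounds `g(0)`, then the roots of `f`, then its
coefficients. Induction on the number of factors shows that the composition map pulls bounded sets
back to bounded sets.
-/

open Polynomial

/-- The monic centered polynomial of degree `d` with low-order coefficients `a`:
`mcPoly d a = z^d + a_{d-2} z^{d-2} + ⋯ + a_1 z + a_0` (the coefficient of
`z^{d-1}` vanishes).  This identifies the space `Poly^{mc}_d` of degree `d` monic
centered complex polynomials with the affine space `ℂ^{d-1}`. -/
noncomputable def mcPoly (d : ℕ) (a : Fin (d - 1) → ℂ) : Polynomial ℂ :=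
  X ^ d + ∑ i : Fin (d - 1), C (a i) * X ^ (i : ℕ)

/-- `p` is a monic centered polynomial of degree `d`:
`p(z) = z^d + a_{d-2} z^{d-2} + ⋯ + a_0`. -/
def MonicCentered (d : ℕ) (p : Polynomial ℂ) : Prop :=
  p.Monic ∧ p.natDegree = d ∧ p.coeff (d - 1) = 0

/-- The composition `f₁ ∘ f₂ ∘ ⋯ ∘ fₙ` of the monic centered polynomials with
coefficient tuples `a i ∈ ℂ^{dᵢ-1}`. -/
noncomputable def mcComp (n : ℕ) (d : Fin n → ℕ)
    (a : (i : Fin n) → Fin (d i - 1) → ℂ) : Polynomial ℂ :=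
  (List.ofFn fun i : Fin n => mcPoly (d i) (a i)).foldr Polynomial.comp X

lemma coeff_mcPoly (d : ℕ) (a : Fin (d - 1) → ℂ) (k : ℕ) :
    (mcPoly d a).coeff k = if h : k < d - 1 then a ⟨k, h⟩ else if k = d then 1 else 0 := by
  have hsum : (∑ i : Fin (d - 1), C (a i) * X ^ (i : ℕ)).coeff k =
      if h : k < d - 1 then a ⟨k, h⟩ else 0 := by
    simp only [finsetSum_coeff, coeff_C_mul_X_pow]
    split_ifs with hk
    · rw [Finset.sum_eq_single ⟨k, hk⟩ (fun i _ hi => if_neg fun h => hi (Fin.ext h.symm))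
        (by simp)]
      simp
    · exact Finset.sum_eq_zero fun i _ => if_neg (by omega)
  rw [mcPoly, coeff_add, hsum, coeff_X_pow]
  split_ifs <;> first | omega | simp

lemma mcPoly_monicCentered {d : ℕ} (hd : 1 ≤ d) (a : Fin (d - 1) → ℂ) :
    MonicCentered d (mcPoly d a) := by
  have hle : (mcPoly d a).natDegree ≤ d := natDegree_le_iff_coeff_eq_zero.2 fun k hk => by
    rw [coeff_mcPoly, dif_neg (by omega), if_neg (by omega)]
  have hlead : (mcPoly d a).coeff d = 1 := by
    rw [coeff_mcPoly, dif_neg (by omega), if_pos rfl]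
  refine ⟨monic_of_natDegree_le_of_coeff_eq_one d hle hlead,
    natDegree_eq_of_le_of_coeff_ne_zero hle (by simp [hlead]), ?_⟩
  rw [coeff_mcPoly, dif_neg (by omega), if_neg (by omega)]

lemma MonicCentered.pos {d : ℕ} {p : ℂ[X]} (hp : MonicCentered d p) : 0 < d := by
  obtain ⟨hmonic, hdeg, hcoeff⟩ := hp
  by_contra! hd
  obtain rfl : d = 0 := by omega
  rw [hmonic.natDegree_eq_zero.1 hdeg] at hcoeff
  simp at hcoeff

noncomputable def mcCoeffs (d : ℕ) (p : ℂ[X]) : Fin (d - 1) → ℂ := fun j => p.coeff j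

lemma MonicCentered.mcPoly_mcCoeffs {d : ℕ} {p : ℂ[X]} (hp : MonicCentered d p) :
    mcPoly d (mcCoeffs d p) = p := by
  obtain ⟨hmonic, hdeg, hcoeff⟩ := hp
  ext k
  rw [coeff_mcPoly]
  split_ifs with hk hkd
  · rfl
  · rw [hkd, ← hdeg, hmonic.coeff_natDegree]
  · rcases lt_or_gt_of_ne hkd with hlt | hgt
    · rw [show k = d - 1 by omega, hcoeff]
    · rw [coeff_eq_zero_of_natDegree_lt (hdeg ▸ hgt)]

lemma MonicCentered.norm_coeff_le {d : ℕ} {p : ℂ[X]} (hp : MonicCentered d p) (k : ℕ) :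
    ‖p.coeff k‖ ≤ max ‖mcCoeffs d p‖ 1 := by
  nth_rw 1 [← hp.mcPoly_mcCoeffs]
  rw [coeff_mcPoly]
  split_ifs
  · exact (norm_le_pi_norm (mcCoeffs d p) _).trans (le_max_left _ _)
  · simp
  · simp

lemma mcPoly_comp (d : ℕ) (a : Fin (d - 1) → ℂ) (q : ℂ[X]) :
    (mcPoly d a).comp q = q ^ d + ∑ i : Fin (d - 1), C (a i) * q ^ (i : ℕ) := by
  simp [mcPoly, add_comp]

lemma MonicCentered.comp {e m : ℕ} {f g : ℂ[X]} (hf : MonicCentered e f)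
    (hg : MonicCentered m g) : MonicCentered (e * m) (f.comp g) := by
  have he := hf.pos
  have hm := hg.pos
  refine ⟨hf.1.comp hg.1 (by rw [hg.2.1]; omega), by rw [natDegree_comp, hf.2.1, hg.2.1], ?_⟩
  have hpow : (g ^ e).coeff (e * m - 1) = 0 := by
    have hnext : (g ^ e).nextCoeff = 0 := by
      rw [hg.1.nextCoeff_pow, nextCoeff_of_natDegree_pos (hg.2.1 ▸ hm), hg.2.1, hg.2.2, smul_zero]
    rwa [nextCoeff_of_natDegree_pos (by rw [hg.1.natDegree_pow, hg.2.1]; positivity),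
      hg.1.natDegree_pow, hg.2.1] at hnext
  rw [← hf.mcPoly_mcCoeffs, mcPoly_comp, coeff_add, hpow, zero_add, finsetSum_coeff]
  refine Finset.sum_eq_zero fun i _ => ?_
  rw [coeff_C_mul, coeff_eq_zero_of_natDegree_lt, mul_zero]
  -- the lower terms have degree at most `(e - 2) * m`
  have hdeg := Nat.mul_le_mul_right m (show (i : ℕ) + 2 ≤ e by omega)
  rw [add_mul] at hdeg
  rw [hg.1.natDegree_pow, hg.2.1]
  omega

lemma mcComp_zero (d : Fin 0 → ℕ) (a : (i : Fin 0) → Fin (d i - 1) → ℂ) :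
    mcComp 0 d a = X := by simp [mcComp]

lemma mcComp_succ (n : ℕ) (d : Fin (n + 1) → ℕ) (a : (i : Fin (n + 1)) → Fin (d i - 1) → ℂ) :
    mcComp (n + 1) d a
      = (mcPoly (d 0) (a 0)).comp (mcComp n (fun i => d i.succ) (fun i => a i.succ)) := by
  simp [mcComp, List.ofFn_succ]

lemma monicCentered_mcComp (n : ℕ) (d : Fin n → ℕ) (hd : ∀ i, 1 ≤ d i)
    (a : (i : Fin n) → Fin (d i - 1) → ℂ) : MonicCentered (∏ i, d i) (mcComp n d a) := by
  induction n with
  | zero => exact ⟨monic_X, by simp [mcComp_zero], by simp [mcComp_zero]⟩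
  | succ n ih =>
    rw [mcComp_succ, Fin.prod_univ_succ]
    exact (mcPoly_monicCentered (hd 0) (a 0)).comp (ih _ (fun i => hd i.succ) _)

lemma continuous_coeff_pow {R α : Type*} [Semiring R] [TopologicalSpace R]
    [IsTopologicalSemiring R] [TopologicalSpace α] {F : α → R[X]}
    (hF : ∀ k, Continuous fun x => (F x).coeff k) (m k : ℕ) :
    Continuous fun x => (F x ^ m).coeff k := by
  induction m generalizing k with
  | zero => simp only [pow_zero, coeff_one]; exact continuous_const
  | succ m ih =>
    simp only [pow_succ, coeff_mul]
    exact continuous_finsetSum _ fun p _ => (ih p.1).mul (hF p.2)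

lemma continuous_coeff_mcComp (n : ℕ) (d : Fin n → ℕ) (k : ℕ) :
    Continuous fun a : (i : Fin n) → Fin (d i - 1) → ℂ => (mcComp n d a).coeff k := by
  induction n generalizing k with
  | zero => simpa only [mcComp_zero] using continuous_const
  | succ n ih =>
    have htail : ∀ k, Continuous fun a : (i : Fin (n + 1)) → Fin (d i - 1) → ℂ =>
        (mcComp n (fun i => d i.succ) (fun i => a i.succ)).coeff k := fun k =>
      (ih _ k).comp (continuous_pi fun i => continuous_apply i.succ)
    simp only [mcComp_succ, mcPoly_comp, coeff_add, finsetSum_coeff, coeff_C_mul]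
    refine (continuous_coeff_pow htail _ k).add
      (continuous_finsetSum _ fun i _ => Continuous.mul ?_ (continuous_coeff_pow htail _ k))
    exact (continuous_apply i).comp (continuous_apply 0)

lemma norm_le_of_mem_roots {K : Type*} [NormedField K] {p : K[X]} (hp : p.Monic) {M : ℝ}
    (hM : ∀ k, ‖p.coeff k‖ ≤ M) {z : K} (hz : z ∈ p.roots) : ‖z‖ ≤ M + 1 := by
  have hM₀ : 0 ≤ M := (norm_nonneg _).trans (hM 0)
  have hcauchy : p.cauchyBound ≤ M.toNNReal + 1 := by
    rw [cauchyBound, hp.leadingCoeff, nnnorm_one, div_one]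
    refine add_le_add_left (Finset.sup_le fun k _ => ?_) 1
    rw [← NNReal.coe_le_coe, coe_nnnorm, Real.coe_toNNReal M hM₀]
    exact hM k
  have h := ((isRoot_of_mem_roots hz).norm_lt_cauchyBound hp.ne_zero).trans_le hcauchy
  rw [← NNReal.coe_lt_coe] at h
  push_cast at h
  rw [Real.coe_toNNReal M hM₀] at h
  exact h.le

lemma norm_coeff_le_of_roots {K : Type*} [NormedField K] [IsAlgClosed K] {p : K[X]}
    (hp : p.Monic) {B : ℝ} (hB : ∀ z ∈ p.roots, ‖z‖ ≤ B) (k : ℕ) :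
    ‖p.coeff k‖ ≤ max B 1 ^ p.natDegree * p.natDegree.choose (p.natDegree / 2) := by
  simpa using coeff_bdd_of_roots_le (RingHom.id K) hp (by simpa using IsAlgClosed.splits p)
    le_rfl (by simpa using hB) k

lemma norm_coeff_sub_C_le_of_isRoot {f g : ℂ[X]} (hfg : f.comp g ≠ 0) (hg : g.Monic)
    (hg₀ : 0 < g.natDegree) {R : ℝ} (hR : ∀ z ∈ (f.comp g).roots, ‖z‖ ≤ R) {β : ℂ}
    (hβ : f.IsRoot β) (k : ℕ) :
    ‖(g - C β).coeff k‖ ≤ max R 1 ^ g.natDegree * g.natDegree.choose (g.natDegree / 2) := by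
  have hdvd : g - C β ∣ f.comp g := by
    simpa using map_dvd (compRingHom g) (dvd_iff_isRoot.2 hβ)
  have hmonic : (g - C β).Monic :=
    hg.sub_of_left (degree_C_le.trans_lt (natDegree_pos_iff_degree_pos.1 hg₀))
  rw [← natDegree_sub_C (a := β)]
  exact norm_coeff_le_of_roots hmonic
    (fun z hz => hR z (Multiset.mem_of_le (roots.le_of_dvd hfg hdvd) hz)) k

lemma MonicCentered.card_roots {e : ℕ} {f : ℂ[X]} (hf : MonicCentered e f) :
    f.roots.card = e := by
  rw [← hf.2.1, splits_iff_card_roots.1 (IsAlgClosed.splits f)]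

lemma MonicCentered.sum_roots {e : ℕ} {f : ℂ[X]} (hf : MonicCentered e f) :
    f.roots.sum = 0 := by
  have h := (IsAlgClosed.splits f).nextCoeff_eq_neg_sum_roots_of_monic hf.1
  rw [nextCoeff_of_natDegree_pos (hf.2.1 ▸ hf.pos), hf.2.1, hf.2.2] at h
  exact neg_eq_zero.1 h.symm

lemma MonicCentered.norm_le_of_forall_mem_roots {e : ℕ} {f : ℂ[X]} (hf : MonicCentered e f)
    {c : ℂ} {B : ℝ} (hB : ∀ β ∈ f.roots, ‖c - β‖ ≤ B) : ‖c‖ ≤ B := by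
  have hsum : (f.roots.map fun β => c - β).sum = e * c := by
    rw [Multiset.sum_map_sub, Multiset.map_const', Multiset.sum_replicate, Multiset.map_id',
      hf.sum_roots, hf.card_roots, sub_zero, nsmul_eq_mul]
  have hle : ‖(f.roots.map fun β => c - β).sum‖ ≤ e * B := by
    refine (norm_multiset_sum_le _).trans ?_
    rw [Multiset.map_map]
    simpa [hf.card_roots] using Multiset.sum_le_card_nsmul _ B (Multiset.forall_mem_map_iff.2 hB)
  rw [hsum, norm_mul, Complex.norm_natCast] at hle
  exact le_of_mul_le_mul_left hle (by exact_mod_cast hf.pos)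

lemma exists_norm_coeff_le_of_norm_coeff_comp_le (e m : ℕ) (M : ℝ) :
    ∃ M' : ℝ, ∀ f g : ℂ[X], MonicCentered e f → MonicCentered m g →
      (∀ k, ‖(f.comp g).coeff k‖ ≤ M) → ∀ k, ‖f.coeff k‖ ≤ M' ∧ ‖g.coeff k‖ ≤ M' := by
  set B := max (M + 1) 1 ^ m * m.choose (m / 2)
  refine ⟨max (max (B + B) 1 ^ e * e.choose (e / 2)) B, fun f g hf hg hM k => ?_⟩
  have hfg := hf.comp hg
  have hsub : ∀ β ∈ f.roots, ∀ k, ‖(g - C β).coeff k‖ ≤ B := fun β hβ k => by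
    simpa [hg.2.1] using norm_coeff_sub_C_le_of_isRoot hfg.1.ne_zero hg.1 (hg.2.1 ▸ hg.pos)
      (fun z hz => norm_le_of_mem_roots hfg.1 hM hz) (isRoot_of_mem_roots hβ) k
  obtain ⟨β₀, hβ₀⟩ := Multiset.card_pos_iff_exists_mem.1 (hf.card_roots ▸ hf.pos)
  have hg0 : ‖g.coeff 0‖ ≤ B :=
    hf.norm_le_of_forall_mem_roots fun β hβ => by simpa using hsub β hβ 0
  have hg : ∀ k, ‖g.coeff k‖ ≤ B
    | 0 => hg0
    | k + 1 => by simpa using hsub β₀ hβ₀ (k + 1)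
  have hroots : ∀ β ∈ f.roots, ‖β‖ ≤ B + B := fun β hβ =>
    calc ‖β‖ = ‖g.coeff 0 - (g.coeff 0 - β)‖ := by rw [sub_sub_cancel]
      _ ≤ ‖g.coeff 0‖ + ‖g.coeff 0 - β‖ := norm_sub_le _ _
      _ ≤ B + B := add_le_add hg0 (by simpa using hsub β hβ 0)
  exact ⟨le_max_of_le_left (by simpa [hf.2.1] using norm_coeff_le_of_roots hf.1 hroots k),
    le_max_of_le_right (hg k)⟩

lemma exists_norm_le_of_norm_coeff_mcComp_le (n : ℕ) (d : Fin n → ℕ) (hd : ∀ i, 1 ≤ d i)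
    (M : ℝ) : ∃ M' : ℝ, ∀ a : (i : Fin n) → Fin (d i - 1) → ℂ,
      (∀ k, ‖(mcComp n d a).coeff k‖ ≤ M) → ‖a‖ ≤ M' := by
  induction n generalizing M with
  | zero => exact ⟨0, fun a _ => by simp [Subsingleton.elim a 0]⟩
  | succ n ih =>
    obtain ⟨R, hR⟩ := exists_norm_coeff_le_of_norm_coeff_comp_le (d 0) (∏ i : Fin n, d i.succ) M
    obtain ⟨M', hM'⟩ := ih (fun i => d i.succ) (fun i => hd i.succ) R
    refine ⟨max R M', fun a ha => ?_⟩
    rw [mcComp_succ] at ha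
    have hcoeff := hR _ _ (mcPoly_monicCentered (hd 0) (a 0))
      (monicCentered_mcComp n _ (fun i => hd i.succ) _) ha
    have hhead : ‖a 0‖ ≤ R :=
      (pi_norm_le_iff_of_nonneg ((norm_nonneg _).trans (hcoeff 0).1)).2 fun j => by
        simpa [coeff_mcPoly] using (hcoeff j).1
    have htail : ‖fun i : Fin n => a i.succ‖ ≤ M' := hM' _ fun k => (hcoeff k).2
    refine (pi_norm_le_iff_of_nonempty a).2 (Fin.cases (hhead.trans (le_max_left _ _)) fun i => ?_)
    exact (norm_le_pi_norm (fun i : Fin n => a i.succ) i).trans (htail.trans (le_max_right _ _))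

lemma isProperMap_of_forall_norm_le {E F : Type*} [NormedAddCommGroup E] [ProperSpace E]
    [NormedAddCommGroup F] {f : E → F} (hf : Continuous f)
    (h : ∀ r, ∃ R, ∀ x, ‖f x‖ ≤ r → ‖x‖ ≤ R) : IsProperMap f := by
  refine isProperMap_iff_isCompact_preimage.2 ⟨hf, fun K hK => ?_⟩
  obtain ⟨r, hr⟩ := hK.isBounded.subset_closedBall 0
  obtain ⟨R, hR⟩ := h r
  refine Metric.isCompact_of_isClosed_isBounded (hK.isClosed.preimage hf)
    ((Metric.isBounded_closedBall (x := 0) (r := R)).subset fun x hx => ?_)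
  simpa using hR x (by simpa using hr hx)

theorem composition_of_monic_centered_wellDefined_and_proper_general
    (n : ℕ) (d : Fin n → ℕ) (hd : ∀ i, 2 ≤ d i) :
    (∀ a : (i : Fin n) → Fin (d i - 1) → ℂ,
      MonicCentered (∏ i, d i) (mcComp n d a)) ∧
    ∃ Φ : ((i : Fin n) → Fin (d i - 1) → ℂ) → (Fin ((∏ i, d i) - 1) → ℂ),
      (∀ a, mcPoly (∏ i, d i) (Φ a) = mcComp n d a) ∧ IsProperMap Φ := by
  have hd₁ : ∀ i, 1 ≤ d i := fun i => one_le_two.trans (hd i)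
  have hmc := monicCentered_mcComp n d hd₁
  refine ⟨hmc, fun a => mcCoeffs (∏ i, d i) (mcComp n d a),
    fun a => (hmc a).mcPoly_mcCoeffs, ?_⟩
  refine isProperMap_of_forall_norm_le
    (continuous_pi fun j => continuous_coeff_mcComp n d j) fun r => ?_
  obtain ⟨R, hR⟩ := exists_norm_le_of_norm_coeff_mcComp_le n d hd₁ (max r 1)
  exact ⟨R, fun a ha => hR a fun k => ((hmc a).norm_coeff_le k).trans (max_le_max_right 1 ha)⟩

/-- **Lemma (properness of the composition map on monic centered polynomials)**.
For any `n ≥ 2` and degrees `d₁, …, dₙ ≥ 2`, the composition map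
`Φ : Poly^{mc}_{d₁} × ⋯ × Poly^{mc}_{dₙ} → Poly^{mc}_{d₁⋯dₙ}`,
`(f₁,…,fₙ) ↦ f₁ ∘ ⋯ ∘ fₙ`, is well defined (the composition of monic centered
polynomials is monic centered of degree `d₁⋯dₙ`) and proper over `ℂ` (identifying
`Poly^{mc}_d` with the coefficient space `ℂ^{d-1}`). -/
theorem composition_of_monic_centered_wellDefined_and_proper
    (n : ℕ) (hn : 2 ≤ n) (d : Fin n → ℕ) (hd : ∀ i, 2 ≤ d i) :
    (∀ a : (i : Fin n) → Fin (d i - 1) → ℂ,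
      MonicCentered (∏ i, d i) (mcComp n d a)) ∧
    ∃ Φ : ((i : Fin n) → Fin (d i - 1) → ℂ) → (Fin ((∏ i, d i) - 1) → ℂ),
      (∀ a, mcPoly (∏ i, d i) (Φ a) = mcComp n d a) ∧ IsProperMap Φ :=
  composition_of_monic_centered_wellDefined_and_proper_general n d hd
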